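/- With notation as above, the subgroup 𝒩 := ⟨{ψ_β : β ⊆ 𝒯_G}⟩ of Aut(F_k(G)) is isomorphic to Z_2^{|𝒯_G|}. -/

import Mathlib

open scoped Classical symmDiff

variable {V : Type*}

/-- The `k`-token graph of `G`: vertices are the `k`-subsets of `V(G)`,
two being adjacent iff their symmetric difference is an edge of `G`. -/
def tokenGraph [DecidableEq V] (G : SimpleGraph V) (k : ℕ) :
    SimpleGraph {A : Finset V // A.card = k} where
  Adj A B := ∃ a b : V, G.Adj a b ∧ (A.1 ∆ B.1) = {a, b}
  symm := by
    constructor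
    rintro A B ⟨a, b, hab, h⟩
    exact ⟨a, b, hab, by rwa [symmDiff_comm]⟩
  loopless := by
    constructor
    rintro A ⟨a, b, hab, h⟩
    rw [symmDiff_self] at h
    exact (Finset.insert_ne_empty a {b}) h.symm

/-- `S` is a 2-cut with the same neighbours: a 2-element vertex set whose removal
disconnects `G` and whose two vertices have the same neighbours outside `S`. -/
def SameNbrCut (G : SimpleGraph V) (S : Finset V) : Prop :=
  S.card = 2 ∧ ¬ (G.induce ((↑S : Set V)ᶜ)).Preconnected ∧
    ∀ x ∈ S, ∀ y ∈ S, ∀ v ∉ S, (G.Adj x v ↔ G.Adj y v)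

/-- `A^S = (A \ S) ∪ (S \ A)`. -/
def tokenMove [DecidableEq V] (A S : Finset V) : Finset V := (A \ S) ∪ (S \ A)

/-- The connected components of `G \ S`. -/
abbrev delComp (G : SimpleGraph V) (S : Finset V) :=
  (G.induce ((↑S : Set V)ᶜ)).ConnectedComponent

/-- The distribution tuple of `A` over the components of `G \ S`. -/
noncomputable def compDist (G : SimpleGraph V) (S : Finset V) (A : Finset V)
    (c : delComp G S) : ℕ :=
  {v : ((↑S : Set V)ᶜ : Set V) | (v : V) ∈ A ∧
    (G.induce ((↑S : Set V)ᶜ)).connectedComponentMk v = c}.ncard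

/-- `T_S`: distribution tuples with `kᵢ ≤ nᵢ` summing to `k - 1`. -/
def TS (G : SimpleGraph V) (S : Finset V) (k : ℕ) : Set (delComp G S → ℕ) :=
  {t | (∀ c, t c ≤ c.supp.ncard) ∧ ∑ᶠ c, t c = k - 1}

/-- The map `φ_{S,α}` on `k`-subsets. -/
noncomputable def phiFun [DecidableEq V] (G : SimpleGraph V) (S : Finset V)
    (α : Set (delComp G S → ℕ)) (A : Finset V) : Finset V :=
  if compDist G S A ∈ α then tokenMove A S else A

/-- The map `ψ_β`, the composition of the `φ_{Sᵢ,βᵢ}`. -/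
noncomputable def psiFun [DecidableEq V] (G : SimpleGraph V) {q : ℕ}
    (S : Fin q → Finset V) (β : ∀ i, Set (delComp G (S i) → ℕ)) :
    Finset V → Finset V :=
  (List.ofFn (fun i => phiFun G (S i) (β i))).foldr (· ∘ ·) id

/-!
Every `φ_{S,α}` with `α ⊆ T_S` moves a single token across `S`: it replaces `A` by `A ∆ S`, where
`|A ∩ S| = 1`. Such a move keeps the distribution tuple of `A` over the components of `G - S`,
and also over those of `G - T` for every other cut `T`: the cuts are pairwise disjoint and, since
`G` is connected and not `C₄`, both vertices of `S` lie in one component of `G - T`. So all tuples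
are invariant under every `ψ_β`, which gives the closed form `ψ_β A = A ∆ ⋃ {Sᵢ | tᵢ(A) ∈ βᵢ}` and
with it `ψ_β ∘ ψ_β' = ψ_{β ∆ β'}`. Hence `β ↦ ψ_β` is a homomorphism from `(𝒫(𝒯_G), ∆) ≅ ℤ₂^{𝒯_G}`
onto `𝒩`. It is injective: any `t ∈ T_S` is the tuple of a `k`-set avoiding a chosen vertex of
`S`, and `ψ_β` moves a token onto that vertex as soon as `t ∈ β`.
-/

open Finset

namespace Finset
variable {α : Type*} [DecidableEq α]

lemma card_symmDiff_of_two_mul_card_inter {s t : Finset α} (h : 2 * #(s ∩ t) = #t) :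
    #(s ∆ t) = #s := by
  have hst : #(s ∆ t) = #(s \ t) + #(t \ s) := card_union_of_disjoint disjoint_sdiff_sdiff
  have hs := card_sdiff_add_card_inter s t
  have ht := card_sdiff_add_card_inter t s
  rw [inter_comm] at ht
  omega

lemma card_filter_symmDiff_of_two_mul_card_inter {s t : Finset α} (p : α → Prop)
    [DecidablePred p] (h : 2 * #(s ∩ t) = #t) (hp : ∀ x ∈ t, ∀ y ∈ t, p x ↔ p y) :
    #((s ∆ t).filter p) = #(s.filter p) := by
  by_cases hpt : ∃ x ∈ t, p x
  · obtain ⟨x, hxt, hx⟩ := hpt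
    have htp : ∀ y ∈ t, p y := fun y hy => (hp x hxt y hy).mp hx
    have hfilter : (s ∆ t).filter p = s.filter p ∆ t := by
      ext v
      simp only [mem_filter, mem_symmDiff]
      grind
    rw [hfilter, card_symmDiff_of_two_mul_card_inter]
    rwa [filter_inter, filter_true_of_mem fun y hy => htp y (mem_inter.mp hy).2]
  · push Not at hpt
    congr 1
    ext v
    simp only [mem_filter, mem_symmDiff]
    grind

lemma biUnion_symmDiff_biUnion {ι : Type*} [DecidableEq ι] {f : ι → Finset α}
    (hf : Pairwise fun i j => Disjoint (f i) (f j)) (s t : Finset ι) :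
    s.biUnion f ∆ t.biUnion f = (s ∆ t).biUnion f := by
  have hunique : ∀ v i j, v ∈ f i → v ∈ f j → i = j := fun v i j hi hj =>
    by_contra fun hij => disjoint_left.mp (hf hij) hi hj
  ext v
  simp only [mem_symmDiff, mem_biUnion]
  grind

lemma eq_pair_of_card_eq_two {s : Finset α} {x y : α} (h : #s = 2) (hx : x ∈ s) (hy : y ∈ s)
    (hxy : x ≠ y) : s = {x, y} :=
  (eq_of_subset_of_card_le (insert_subset hx (singleton_subset_iff.mpr hy))
    (by rw [h, card_pair hxy])).symm

end Finset

namespace SimpleGraph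

lemma ConnectedComponent.eq_of_mem_image_val_supp {p : V → Prop} {H : SimpleGraph (Subtype p)}
    {c c' : H.ConnectedComponent} {v : V} (hc : v ∈ Subtype.val '' c.supp)
    (hc' : v ∈ Subtype.val '' c'.supp) : c = c' := by
  obtain ⟨w, hw, rfl⟩ := hc
  obtain ⟨w', hw', hww'⟩ := hc'
  exact eq_of_common_vertex hw (Subtype.ext hww' ▸ hw')

lemma Walk.exists_reachable_induce_compl_adj {G : SimpleGraph V} {s : Set V} {a c : V}
    (p : G.Walk a c) (ha : a ∉ s) (hc : c ∈ s) :
    ∃ (b : V) (hb : b ∉ s), (∃ x ∈ s, G.Adj x b) ∧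
      (G.induce sᶜ).Reachable ⟨a, ha⟩ ⟨b, hb⟩ := by
  induction p with
  | nil => exact absurd hc ha
  | @cons u v w huv p ih =>
    by_cases hv : v ∈ s
    · exact ⟨u, ha, ⟨v, hv, huv.symm⟩, Reachable.refl _⟩
    · obtain ⟨b, hb, hadj, hr⟩ := ih hv hc
      have huv' : (G.induce sᶜ).Adj ⟨u, ha⟩ ⟨v, hv⟩ := by simpa using huv
      exact ⟨b, hb, hadj, huv'.reachable.trans hr⟩

lemma Reachable.eq_of_forall_not_adj {W : Type*} {H : SimpleGraph W} {a b : W}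
    (h : H.Reachable a b) (ha : ∀ w, ¬ H.Adj a w) : a = b := by
  obtain ⟨p⟩ := h
  cases p with
  | nil => rfl
  | cons h _ => exact absurd h (ha _)

lemma nonempty_iso_cycleGraph_four {G : SimpleGraph V} {x y u v : V}
    (hV : ∀ z, z = x ∨ z = y ∨ z = u ∨ z = v)
    (hxy : x ≠ y) (huv : u ≠ v) (hxu : x ≠ u) (hxv : x ≠ v) (hyu : y ≠ u) (hyv : y ≠ v)
    (axu : G.Adj x u) (axv : G.Adj x v) (ayu : G.Adj y u) (ayv : G.Adj y v)
    (nxy : ¬ G.Adj x y) (nuv : ¬ G.Adj u v) : Nonempty (G ≃g cycleGraph 4) := by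
  let e : Fin 4 → V := ![x, u, y, v]
  have he : e.Bijective := by
    refine ⟨fun i j h => ?_, fun z => ?_⟩
    · fin_cases i <;> fin_cases j <;> simp_all [e, eq_comm]
    · rcases hV z with rfl | rfl | rfl | rfl
      exacts [⟨0, rfl⟩, ⟨2, rfl⟩, ⟨1, rfl⟩, ⟨3, rfl⟩]
  refine ⟨(RelIso.mk (Equiv.ofBijective e he) fun {i j} => ?_).symm⟩
  fin_cases i <;> fin_cases j <;>
    simp [e, axu, axv, ayu, ayv, axu.symm, axv.symm, ayu.symm, ayv.symm, nxy, nuv,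
      G.adj_comm y x, G.adj_comm v u] <;> decide

end SimpleGraph

section compDist

variable {G : SimpleGraph V}

lemma compDist_eq_card_filter (T B : Finset V) (c : delComp G T) :
    compDist G T B c = #(B.filter (· ∈ Subtype.val '' c.supp)) := by
  rw [compDist, ← Set.ncard_image_of_injective _ Subtype.val_injective, ← Set.ncard_coe_finset]
  congr 1
  ext v
  simp [SimpleGraph.ConnectedComponent.mem_supp_iff]

lemma notMem_of_mem_image_val_supp {T : Finset V} {c : delComp G T} {v : V}
    (hv : v ∈ Subtype.val '' c.supp) : v ∉ T := by
  obtain ⟨w, -, rfl⟩ := hv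
  exact w.2

lemma compDist_symmDiff_self [DecidableEq V] (S A : Finset V) :
    compDist G S (A ∆ S) = compDist G S A := by
  funext c
  simp only [compDist_eq_card_filter]
  congr 1
  ext v
  simp only [mem_filter, mem_symmDiff]
  have hvS : v ∈ Subtype.val '' c.supp → v ∉ S := notMem_of_mem_image_val_supp
  tauto

lemma finsum_compDist [Fintype V] [DecidableEq V] (S A : Finset V) :
    ∑ᶠ c, compDist G S A c = #(A \ S) := by
  have hA : A \ S = univ.biUnion fun c : delComp G S => A.filter (· ∈ Subtype.val '' c.supp) := by
    ext v
    simp only [mem_sdiff, mem_biUnion, mem_univ, true_and, mem_filter]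
    refine ⟨fun ⟨hvA, hvS⟩ => ⟨_, hvA, ⟨v, hvS⟩, rfl, rfl⟩, fun ⟨c, hvA, hv⟩ => ?_⟩
    exact ⟨hvA, notMem_of_mem_image_val_supp hv⟩
  rw [finsum_eq_sum_of_fintype, hA, card_biUnion]
  · simp only [compDist_eq_card_filter]
  · intro c _ c' _ hcc'
    exact disjoint_filter.mpr fun v _ hv hv' =>
      hcc' (SimpleGraph.ConnectedComponent.eq_of_mem_image_val_supp hv hv')

lemma card_inter_eq_one_of_mem_TS [Fintype V] [DecidableEq V] {U A : Finset V} {k : ℕ}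
    (hk : 1 ≤ k) (hA : #A = k) (ht : compDist G U A ∈ TS G U k) : #(A ∩ U) = 1 := by
  have hsdiff : #(A \ U) = k - 1 := (finsum_compDist U A).symm.trans ht.2
  have := card_sdiff_add_card_inter A U
  omega

lemma exists_card_eq_compDist_eq [Fintype V] [DecidableEq V] {U : Finset V} {k : ℕ}
    {t : delComp G U → ℕ} (hk : 1 ≤ k) (hU : #U = 2) (ht : t ∈ TS G U k) {y : V}
    (hy : y ∈ U) : ∃ A : Finset V, #A = k ∧ compDist G U A = t ∧ y ∉ A := by
  -- put `t c` tokens into each component `c` and the last one on the vertex `x ≠ y` of `U`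
  obtain ⟨x, hx, hxy⟩ := exists_mem_ne (by omega : 1 < #U) y
  set X : delComp G U → Finset V := fun c => univ.filter (· ∈ Subtype.val '' c.supp)
  have hX : ∀ c, t c ≤ #(X c) := fun c => by
    calc t c ≤ c.supp.ncard := ht.1 c
      _ = #(X c) := by
        rw [← Set.ncard_image_of_injective _ Subtype.val_injective, ← Set.ncard_coe_finset]
        congr 1
        ext v
        simp [X]
  choose B hBX hB using fun c => exists_subset_card_eq (hX c)
  have hBc : ∀ c c' v, v ∈ B c' → (v ∈ Subtype.val '' c.supp ↔ c' = c) := fun c c' v hv => by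
    have hv' : v ∈ Subtype.val '' c'.supp := (mem_filter.mp (hBX c' hv)).2
    exact ⟨fun h => SimpleGraph.ConnectedComponent.eq_of_mem_image_val_supp hv' h, (· ▸ hv')⟩
  have hBU : ∀ c, ∀ v ∈ B c, v ∉ U := fun c v hv =>
    notMem_of_mem_image_val_supp ((hBc c c v hv).mpr rfl)
  set W := univ.biUnion B
  have hxW : x ∉ W := by simpa [W] using fun c hxc => hBU c x hxc hx
  have hyW : y ∉ W := by simpa [W] using fun c hyc => hBU c y hyc hy
  refine ⟨insert x W, ?_, funext fun c => ?_, by simp [hxy.symm, hyW]⟩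
  · rw [card_insert_of_notMem hxW, card_biUnion fun c _ c' _ hcc' =>
      disjoint_left.mpr fun v hv hv' => hcc' ((hBc c' c v hv).mp ((hBc c' c' v hv').mpr rfl))]
    simp only [hB, ← finsum_eq_sum_of_fintype, ht.2]
    omega
  · rw [compDist_eq_card_filter, ← hB c]
    congr 1
    ext v
    simp only [mem_filter, mem_insert, W, mem_biUnion, mem_univ, true_and]
    refine ⟨?_, fun hv => ⟨Or.inr ⟨c, hv⟩, (hBc c c v hv).mpr rfl⟩⟩
    rintro ⟨rfl | ⟨c', hv⟩, hvc⟩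
    · exact absurd hx (notMem_of_mem_image_val_supp hvc)
    · rwa [(hBc c c' v hv).mp hvc] at hv

end compDist

def InOneComponent (G : SimpleGraph V) (T S : Finset V) : Prop :=
  ∃ c : delComp G T, (S : Set V) ⊆ Subtype.val '' c.supp

lemma compDist_symmDiff_of_inOneComponent [DecidableEq V] {G : SimpleGraph V} {S T A : Finset V}
    (hS : #S = 2) (hST : InOneComponent G T S) (hA : #(A ∩ S) = 1) :
    compDist G T (A ∆ S) = compDist G T A := by
  obtain ⟨c₀, hc₀⟩ := hST
  funext c
  simp only [compDist_eq_card_filter]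
  refine card_filter_symmDiff_of_two_mul_card_inter _ (by omega) fun x hx y hy => ?_
  have hx₀ := hc₀ (mem_coe.mpr hx)
  have hy₀ := hc₀ (mem_coe.mpr hy)
  constructor <;> intro h
  · rwa [SimpleGraph.ConnectedComponent.eq_of_mem_image_val_supp h hx₀]
  · rwa [SimpleGraph.ConnectedComponent.eq_of_mem_image_val_supp h hy₀]

lemma InOneComponent.disjoint {G : SimpleGraph V} {S T : Finset V} (h : InOneComponent G T S) :
    Disjoint S T := by
  obtain ⟨c, hc⟩ := h
  exact disjoint_left.mpr fun _ hv => notMem_of_mem_image_val_supp (hc (mem_coe.mpr hv))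

namespace SameNbrCut

open SimpleGraph

variable {G : SimpleGraph V} {S T : Finset V}

lemma adj_of_adj (hS : SameNbrCut G S) {x y v : V} (hx : x ∈ S) (hy : y ∈ S) (hv : v ∉ S)
    (h : G.Adj x v) : G.Adj y v :=
  (hS.2.2 x hx y hy v hv).mp h

lemma exists_ne_component (hS : SameNbrCut G S) : ∃ c c' : delComp G S, c ≠ c' := by
  obtain ⟨u, v, huv⟩ : ∃ u v, ¬ (G.induce ((↑S : Set V)ᶜ)).Reachable u v := by
    simpa [SimpleGraph.Preconnected] using hS.2.1
  exact ⟨_, _, fun h => huv (SimpleGraph.ConnectedComponent.exact h)⟩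

lemma exists_adj_mem_supp (hG : G.Connected) (hS : SameNbrCut G S) {x : V} (hx : x ∈ S)
    (c : delComp G S) : ∃ b ∈ c.supp, G.Adj x b := by
  obtain ⟨a, rfl⟩ := c.exists_rep
  obtain ⟨p⟩ := hG.preconnected a x
  obtain ⟨b, hb, ⟨s, hs, hsb⟩, hr⟩ :=
    p.exists_reachable_induce_compl_adj (s := (S : Set V)) a.2 (mem_coe.mpr hx)
  exact ⟨⟨b, hb⟩, SimpleGraph.ConnectedComponent.sound hr.symm, hS.adj_of_adj hs hx hb hsb⟩

lemma disjoint (hG : G.Connected) (hS : SameNbrCut G S) (hT : SameNbrCut G T) (hne : S ≠ T) :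
    Disjoint S T := by
  rw [Finset.disjoint_left]
  intro v hvS hvT
  obtain ⟨v', hv'T, hv'v⟩ := exists_mem_ne (by rw [hT.1]; norm_num) v
  have hT' : T = {v, v'} := eq_pair_of_card_eq_two hT.1 hvT hv'T hv'v.symm
  have hv'S : v' ∉ S := fun hv'S =>
    hne ((eq_pair_of_card_eq_two hS.1 hvS hv'S hv'v.symm).trans hT'.symm)
  -- `v'` shares the neighbours of `v`, and `v` has a neighbour in every component of `G - S`
  have hcomp : ∀ c : delComp G S, c = (G.induce _).connectedComponentMk ⟨v', hv'S⟩ := by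
    intro c
    obtain ⟨w, hwc, hvw⟩ := hS.exists_adj_mem_supp hG hvS c
    rw [← hwc]
    by_cases hw : (w : V) = v'
    · exact congrArg _ (Subtype.ext hw)
    · have hwT : (w : V) ∉ T := by
        simpa [hT', hw] using fun h : (w : V) = v => w.2 (h ▸ hvS)
      exact SimpleGraph.ConnectedComponent.sound
        (SimpleGraph.Adj.reachable (by simpa using (hT.adj_of_adj hvT hv'T hwT hvw).symm))
  obtain ⟨c, c', hcc'⟩ := hS.exists_ne_component
  exact hcc' ((hcomp c).trans (hcomp c').symm)

lemma nonempty_iso_cycleGraph_four (hG : G.Connected) (hS : SameNbrCut G S)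
    (hT : SameNbrCut G T) (hST : Disjoint S T) {x : V} (hx : x ∈ S)
    (hxT : ∀ z, G.Adj x z → z ∈ T) : Nonempty (G ≃g SimpleGraph.cycleGraph 4) := by
  obtain ⟨y, hy, hyx⟩ := exists_mem_ne (by rw [hS.1]; norm_num) x
  have hS' : S = {x, y} := eq_pair_of_card_eq_two hS.1 hx hy hyx.symm
  have nxy : ¬ G.Adj x y := fun h => disjoint_left.mp hST hy (hxT y h)
  have hyT : ∀ z, G.Adj y z → z ∈ T := fun z hz =>
    hxT z (hS.adj_of_adj hy hx (by simpa [hS'] using ⟨fun h => nxy (h ▸ hz.symm), hz.ne'⟩) hz)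
  have hN : ∀ d ∈ S, ∀ z, G.Adj d z → z ∈ T := by
    simp only [hS', mem_insert, mem_singleton]
    rintro d (rfl | rfl)
    exacts [hxT, hyT]
  obtain ⟨c, c', hcc'⟩ := hS.exists_ne_component
  obtain ⟨u, huc, axu⟩ := hS.exists_adj_mem_supp hG hx c
  obtain ⟨v, hvc, axv⟩ := hS.exists_adj_mem_supp hG hx c'
  have hu := hxT u axu
  have hv := hxT v axv
  have nuv : ¬ G.Adj u v := fun h => hcc' <| by
    rw [← huc, ← hvc]
    exact ConnectedComponent.connectedComponentMk_eq_of_adj (by simpa using h)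
  have hsep : ∀ d : ((↑S : Set V)ᶜ : Set V), ¬ (G.Adj u d ∧ G.Adj v d) := fun d ⟨hud, hvd⟩ =>
    hcc' <| by
      rw [← huc, ← hvc]
      exact (ConnectedComponent.connectedComponentMk_eq_of_adj (by simpa using hud)).trans
        (ConnectedComponent.connectedComponentMk_eq_of_adj (by simpa using hvd)).symm
  have huv : (u : V) ≠ v := fun h => hcc' (by rw [← huc, ← hvc, Subtype.ext h])
  have hT' : T = {(u : V), (v : V)} := eq_pair_of_card_eq_two hT.1 hu hv huv
  -- any other vertex `z` has, in its component of `G - T`, a common neighbour of `u` and `v`;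
  -- it lies outside `S` because `x` and `y` are isolated in `G - T`
  have hV : ∀ z, z = x ∨ z = y ∨ z = u ∨ z = v := by
    by_contra! ⟨z, hzx, hzy, hzu, hzv⟩
    have hzT : z ∉ T := by simp [hT', hzu, hzv]
    obtain ⟨d, hdz, aud⟩ :=
      hT.exists_adj_mem_supp hG hu ((G.induce _).connectedComponentMk ⟨z, hzT⟩)
    have hdS : (d : V) ∉ S := fun hdS => by
      have := (ConnectedComponent.exact hdz).eq_of_forall_not_adj fun w hdw =>
        w.2 (hN d hdS w (by simpa using hdw))
      simp [hS', this, hzx, hzy] at hdS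
    exact hsep ⟨d, hdS⟩ ⟨aud, hT.adj_of_adj hu hv d.2 aud⟩
  have hxu : x ≠ u := fun h => disjoint_left.mp hST hx (h ▸ hu)
  have hxv : x ≠ v := fun h => disjoint_left.mp hST hx (h ▸ hv)
  have hyu : y ≠ u := fun h => disjoint_left.mp hST hy (h ▸ hu)
  have hyv : y ≠ v := fun h => disjoint_left.mp hST hy (h ▸ hv)
  exact SimpleGraph.nonempty_iso_cycleGraph_four hV hyx.symm huv hxu hxv hyu hyv axu axv
    (hS.adj_of_adj hx hy u.2 axu) (hS.adj_of_adj hx hy v.2 axv) nxy nuv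

lemma inOneComponent (hG : G.Connected) (h4 : IsEmpty (G ≃g SimpleGraph.cycleGraph 4))
    (hS : SameNbrCut G S) (hT : SameNbrCut G T) (hne : S ≠ T) : InOneComponent G T S := by
  have hST := hS.disjoint hG hT hne
  obtain ⟨x, y, hxy, rfl⟩ := card_eq_two.mp hS.1
  have hxT : x ∉ T := disjoint_left.mp hST (by simp)
  have hyT : y ∉ T := disjoint_left.mp hST (by simp)
  suffices h : (G.induce _).Reachable ⟨x, hxT⟩ ⟨y, hyT⟩ by
    refine ⟨(G.induce _).connectedComponentMk ⟨x, hxT⟩, fun z hz => ?_⟩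
    rcases (by simpa using hz : z = x ∨ z = y) with rfl | rfl
    exacts [⟨⟨z, hxT⟩, rfl, rfl⟩, ⟨⟨z, hyT⟩, SimpleGraph.ConnectedComponent.sound h.symm, rfl⟩]
  obtain ⟨w, axw, hwT⟩ : ∃ w, G.Adj x w ∧ w ∉ T := by
    by_contra! h
    exact h4.false (hS.nonempty_iso_cycleGraph_four hG hT hST (by simp) h).some
  by_cases hwy : w = y
  · subst hwy
    exact SimpleGraph.Adj.reachable (by simpa using axw)
  · have hwS : w ∉ ({x, y} : Finset V) := by simp [hwy, axw.ne']
    exact (SimpleGraph.Adj.reachable (by simpa using axw : (G.induce _).Adj _ ⟨w, hwT⟩)).trans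
      (SimpleGraph.Adj.reachable (by simpa using hS.adj_of_adj (by simp) (by simp) hwS axw)).symm

end SameNbrCut

section phiFun

variable [DecidableEq V] {G : SimpleGraph V} {U T A : Finset V} {α : Set (delComp G U → ℕ)}
  {k : ℕ}

lemma phiFun_of_mem (h : compDist G U A ∈ α) : phiFun G U α A = A ∆ U := if_pos h

lemma phiFun_of_notMem (h : compDist G U A ∉ α) : phiFun G U α A = A := if_neg h

lemma compDist_phiFun_self : compDist G U (phiFun G U α A) = compDist G U A := by
  by_cases h : compDist G U A ∈ α
  · rw [phiFun_of_mem h, compDist_symmDiff_self]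
  · rw [phiFun_of_notMem h]

variable [Fintype V]

lemma card_phiFun (hU : #U = 2) (hk : 1 ≤ k) (hα : α ⊆ TS G U k) (hA : #A = k) :
    #(phiFun G U α A) = k := by
  by_cases h : compDist G U A ∈ α
  · rw [phiFun_of_mem h, card_symmDiff_of_two_mul_card_inter, hA]
    rw [card_inter_eq_one_of_mem_TS hk hA (hα h), hU]
  · rwa [phiFun_of_notMem h]

lemma compDist_phiFun_of_inOneComponent (hU : #U = 2) (hUT : InOneComponent G T U) (hk : 1 ≤ k)
    (hα : α ⊆ TS G U k) (hA : #A = k) : compDist G T (phiFun G U α A) = compDist G T A := by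
  by_cases h : compDist G U A ∈ α
  · rw [phiFun_of_mem h, compDist_symmDiff_of_inOneComponent hU hUT
      (card_inter_eq_one_of_mem_TS hk hA (hα h))]
  · rw [phiFun_of_notMem h]

end phiFun

/-- What the algebra of the maps `ψ_β` needs from the cuts: a token move across one of them does
not change the distribution tuples with respect to any other. -/
structure IndependentCuts (G : SimpleGraph V) {ι : Type*} (S : ι → Finset V) : Prop where
  card_eq_two : ∀ i, #(S i) = 2
  inOneComponent : Pairwise fun i j => InOneComponent G (S j) (S i)

lemma SameNbrCut.independentCuts {G : SimpleGraph V} {ι : Type*} {S : ι → Finset V}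
    (hG : G.Connected) (h4 : IsEmpty (G ≃g SimpleGraph.cycleGraph 4))
    (hinj : Function.Injective S) (hcut : ∀ i, SameNbrCut G (S i)) : IndependentCuts G S :=
  ⟨fun i => (hcut i).1, fun _ _ hij => (hcut _).inOneComponent hG h4 (hcut _) (hinj.ne hij)⟩

noncomputable def phiFold [DecidableEq V] (G : SimpleGraph V) {ι : Type*} (S : ι → Finset V)
    (β : ∀ i, Set (delComp G (S i) → ℕ)) (l : List ι) (A : Finset V) : Finset V :=
  l.foldr (fun i => phiFun G (S i) (β i)) A

namespace IndependentCuts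

variable {G : SimpleGraph V} {ι : Type*} {S : ι → Finset V}

lemma pairwise_disjoint (hS : IndependentCuts G S) : Pairwise fun i j => Disjoint (S i) (S j) :=
  fun _ _ hij => (hS.inOneComponent hij).disjoint

variable [Fintype V] [DecidableEq V] {β : ∀ i, Set (delComp G (S i) → ℕ)} {k : ℕ} {A : Finset V}

lemma card_phiFold (hS : IndependentCuts G S) (hk : 1 ≤ k) (hβ : ∀ i, β i ⊆ TS G (S i) k)
    (l : List ι) (hA : #A = k) : #(phiFold G S β l A) = k := by
  induction l with
  | nil => exact hA
  | cons i l ih => exact card_phiFun (hS.card_eq_two i) hk (hβ i) ih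

lemma compDist_phiFold (hS : IndependentCuts G S) (hk : 1 ≤ k) (hβ : ∀ i, β i ⊆ TS G (S i) k)
    (l : List ι) (hA : #A = k) (j : ι) :
    compDist G (S j) (phiFold G S β l A) = compDist G (S j) A := by
  induction l with
  | nil => rfl
  | cons i l ih =>
    rw [← ih]
    obtain rfl | hij := eq_or_ne i j
    · exact compDist_phiFun_self
    · exact compDist_phiFun_of_inOneComponent (hS.card_eq_two i) (hS.inOneComponent hij) hk (hβ i)
        (hS.card_phiFold hk hβ l hA)

lemma phiFold_eq_symmDiff [DecidableEq ι] (hS : IndependentCuts G S) (hk : 1 ≤ k)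
    (hβ : ∀ i, β i ⊆ TS G (S i) k) {l : List ι} (hl : l.Nodup) (hA : #A = k) :
    phiFold G S β l A = A ∆ (l.toFinset.filter fun i => compDist G (S i) A ∈ β i).biUnion S := by
  induction l with
  | nil => exact (symmDiff_bot A).symm
  | cons i l ih =>
    obtain ⟨hil, hl⟩ := List.nodup_cons.mp hl
    change phiFun G (S i) (β i) (phiFold G S β l A) = _
    rw [List.toFinset_cons, filter_insert]
    by_cases h : compDist G (S i) A ∈ β i
    · have hdisj :
          Disjoint (S i) ((l.toFinset.filter fun i => compDist G (S i) A ∈ β i).biUnion S) :=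
        (disjoint_biUnion_right _ _ _).mpr fun j hj => hS.pairwise_disjoint
          fun hij => hil (hij ▸ List.mem_toFinset.mp (mem_filter.mp hj).1)
      rw [phiFun_of_mem (by rwa [hS.compDist_phiFold hk hβ l hA]), ih hl, if_pos h,
        biUnion_insert, symmDiff_assoc, symmDiff_comm _ (S i), Finset.symmDiff_eq_union hdisj]
    · rw [phiFun_of_notMem (by rwa [hS.compDist_phiFold hk hβ l hA]), ih hl, if_neg h]

end IndependentCuts

lemma psiFun_eq_phiFold [DecidableEq V] {G : SimpleGraph V} {q : ℕ} {S : Fin q → Finset V}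
    {β : ∀ i, Set (delComp G (S i) → ℕ)} {A : Finset V} :
    psiFun G S β A = phiFold G S β (List.finRange q) A := by
  unfold psiFun phiFold
  rw [List.ofFn_eq_map, List.foldr_map]
  induction List.finRange q with
  | nil => rfl
  | cons i l ih => exact congrArg (phiFun G (S i) (β i)) ih

namespace IndependentCuts

variable [Fintype V] [DecidableEq V] {G : SimpleGraph V} {q : ℕ} {S : Fin q → Finset V}
  {β β' : ∀ i, Set (delComp G (S i) → ℕ)} {k : ℕ} {A : Finset V}

lemma card_psiFun (hS : IndependentCuts G S) (hk : 1 ≤ k) (hβ : ∀ i, β i ⊆ TS G (S i) k)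
    (hA : #A = k) : #(psiFun G S β A) = k := by
  rw [psiFun_eq_phiFold]
  exact hS.card_phiFold hk hβ _ hA

lemma compDist_psiFun (hS : IndependentCuts G S) (hk : 1 ≤ k) (hβ : ∀ i, β i ⊆ TS G (S i) k)
    (hA : #A = k) (j : Fin q) : compDist G (S j) (psiFun G S β A) = compDist G (S j) A := by
  rw [psiFun_eq_phiFold]
  exact hS.compDist_phiFold hk hβ _ hA j

lemma psiFun_eq_symmDiff (hS : IndependentCuts G S) (hk : 1 ≤ k) (hβ : ∀ i, β i ⊆ TS G (S i) k)
    (hA : #A = k) :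
    psiFun G S β A = A ∆ (univ.filter fun i => compDist G (S i) A ∈ β i).biUnion S := by
  rw [psiFun_eq_phiFold, hS.phiFold_eq_symmDiff hk hβ (List.nodup_finRange q) hA,
    List.toFinset_finRange]

lemma psiFun_psiFun (hS : IndependentCuts G S) (hk : 1 ≤ k) (hβ : ∀ i, β i ⊆ TS G (S i) k)
    (hβ' : ∀ i, β' i ⊆ TS G (S i) k) (hA : #A = k) :
    psiFun G S β (psiFun G S β' A) = psiFun G S (β ∆ β') A := by
  have hββ' : ∀ i, (β ∆ β') i ⊆ TS G (S i) k := fun i t ht => by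
    rcases Set.mem_symmDiff.mp ht with h | h
    exacts [hβ i h.1, hβ' i h.1]
  rw [hS.psiFun_eq_symmDiff hk hβ (hS.card_psiFun hk hβ' hA)]
  simp only [hS.compDist_psiFun hk hβ' hA]
  rw [hS.psiFun_eq_symmDiff hk hβ' hA, hS.psiFun_eq_symmDiff hk hββ' hA, symmDiff_assoc,
    biUnion_symmDiff_biUnion hS.pairwise_disjoint]
  congr 2
  ext i
  simp only [mem_symmDiff, mem_filter, mem_univ, true_and, Pi.symmDiff_apply, Set.mem_symmDiff]
  tauto

lemma psiFun_psiFun_self (hS : IndependentCuts G S) (hk : 1 ≤ k) (hβ : ∀ i, β i ⊆ TS G (S i) k)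
    (hA : #A = k) : psiFun G S β (psiFun G S β A) = A := by
  rw [hS.psiFun_psiFun hk hβ hβ hA, symmDiff_self,
    hS.psiFun_eq_symmDiff hk (β := ⊥) (fun _ => Set.empty_subset _) hA]
  simp

lemma exists_psiFun_ne (hS : IndependentCuts G S) (hk : 1 ≤ k) (hβ : ∀ i, β i ⊆ TS G (S i) k)
    {i : Fin q} {t : delComp G (S i) → ℕ} (ht : t ∈ β i) :
    ∃ A : Finset V, #A = k ∧ psiFun G S β A ≠ A := by
  obtain ⟨y, hy⟩ := card_pos.mp (by rw [hS.card_eq_two i]; norm_num : 0 < #(S i))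
  obtain ⟨A, hA, hAt, hyA⟩ := exists_card_eq_compDist_eq hk (hS.card_eq_two i) (hβ i ht) hy
  refine ⟨A, hA, fun h => hyA ?_⟩
  have hy' : y ∈ psiFun G S β A := by
    rw [hS.psiFun_eq_symmDiff hk hβ hA, mem_symmDiff]
    exact Or.inr ⟨mem_biUnion.mpr ⟨i, mem_filter.mpr ⟨mem_univ _, hAt ▸ ht⟩, hy⟩, hyA⟩
  rwa [h] at hy'

end IndependentCuts

section group

variable {G : SimpleGraph V} {q : ℕ} {S : Fin q → Finset V} {k : ℕ}

/-- Identifies `ℤ₂^{𝒯_G}` with the families `β ⊆ 𝒯_G`: `f` is the indicator function of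
`tuplesOf f`. -/
def tuplesOf (f : ((i : Fin q) × TS G (S i) k) → Multiplicative (ZMod 2)) (i : Fin q) :
    Set (delComp G (S i) → ℕ) :=
  Subtype.val '' {t | f ⟨i, t⟩ ≠ 1}

lemma tuplesOf_subset (f : ((i : Fin q) × TS G (S i) k) → Multiplicative (ZMod 2)) (i : Fin q) :
    tuplesOf f i ⊆ TS G (S i) k :=
  Subtype.coe_image_subset _ _

lemma tuplesOf_mul (f g : ((i : Fin q) × TS G (S i) k) → Multiplicative (ZMod 2)) :
    tuplesOf (f * g) = tuplesOf f ∆ tuplesOf g := by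
  funext i
  rw [Pi.symmDiff_apply, tuplesOf, tuplesOf, tuplesOf, ← Set.image_symmDiff Subtype.val_injective]
  congr 1
  ext t
  simp only [Pi.mul_apply, Set.mem_ofPred_eq, Set.mem_symmDiff]
  generalize f ⟨i, t⟩ = a
  generalize g ⟨i, t⟩ = b
  revert a b
  decide

lemma exists_tuplesOf_eq {β : ∀ i, Set (delComp G (S i) → ℕ)} (hβ : ∀ i, β i ⊆ TS G (S i) k) :
    ∃ f : ((i : Fin q) × TS G (S i) k) → Multiplicative (ZMod 2), tuplesOf f = β := by
  refine ⟨fun p => if (p.2 : delComp G (S p.1) → ℕ) ∈ β p.1 then Multiplicative.ofAdd 1 else 1,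
    funext fun i => Set.ext fun t => ⟨?_, fun ht => ⟨⟨t, hβ i ht⟩, ?_, rfl⟩⟩⟩
  · rintro ⟨t, ht, rfl⟩
    by_contra h
    exact ht (if_neg h)
  · simp only [Set.mem_ofPred_eq, if_pos ht]
    decide

lemma exists_mem_tuplesOf {f : ((i : Fin q) × TS G (S i) k) → Multiplicative (ZMod 2)}
    (hf : f ≠ 1) : ∃ i t, t ∈ tuplesOf f i := by
  obtain ⟨⟨i, t⟩, ht⟩ := Function.ne_iff.mp hf
  exact ⟨i, t, t, ht, rfl⟩

variable [Fintype V] [DecidableEq V]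

noncomputable def psiPerm (hS : IndependentCuts G S) (hk : 1 ≤ k)
    (β : ∀ i, Set (delComp G (S i) → ℕ)) (hβ : ∀ i, β i ⊆ TS G (S i) k) :
    Equiv.Perm {A : Finset V // #A = k} :=
  Function.Involutive.toPerm (fun A => ⟨psiFun G S β A, hS.card_psiFun hk hβ A.2⟩)
    fun A => Subtype.ext (hS.psiFun_psiFun_self hk hβ A.2)

noncomputable def psiHom (hS : IndependentCuts G S) (hk : 1 ≤ k) :
    (((i : Fin q) × TS G (S i) k) → Multiplicative (ZMod 2)) →*
      Equiv.Perm {A : Finset V // #A = k} :=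
  MonoidHom.mk' (fun f => psiPerm hS hk (tuplesOf f) (tuplesOf_subset f)) fun f g =>
    Equiv.ext fun A => Subtype.ext <| by
      change psiFun G S (tuplesOf (f * g)) A = psiFun G S (tuplesOf f) (psiFun G S (tuplesOf g) A)
      rw [tuplesOf_mul, hS.psiFun_psiFun hk (tuplesOf_subset f) (tuplesOf_subset g) A.2]

lemma coe_range_psiHom (hS : IndependentCuts G S) (hk : 1 ≤ k) :
    ((psiHom hS hk).range : Set (Equiv.Perm {A : Finset V // #A = k})) =
      {e | ∃ β : ∀ i, Set (delComp G (S i) → ℕ), (∀ i, β i ⊆ TS G (S i) k) ∧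
        ∀ A : {A : Finset V // #A = k}, (e A : Finset V) = psiFun G S β A} := by
  ext e
  constructor
  · rintro ⟨f, rfl⟩
    exact ⟨tuplesOf f, tuplesOf_subset f, fun A => rfl⟩
  · rintro ⟨β, hβ, he⟩
    obtain ⟨f, rfl⟩ := exists_tuplesOf_eq hβ
    exact ⟨f, Equiv.ext fun A => Subtype.ext (he A).symm⟩

lemma injective_psiHom (hS : IndependentCuts G S) (hk : 1 ≤ k) :
    Function.Injective (psiHom hS hk) := by
  refine (injective_iff_map_eq_one _).mpr fun f hf => by_contra fun hne => ?_
  obtain ⟨i, t, ht⟩ := exists_mem_tuplesOf hne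
  obtain ⟨A, hA, hψ⟩ := hS.exists_psiFun_ne hk (tuplesOf_subset f) ht
  exact hψ (congrArg Subtype.val (DFunLike.congr_fun hf (⟨A, hA⟩ : {A : Finset V // #A = k})))

end group

theorem N_iso_Z2_pow_general [Fintype V] [DecidableEq V] (G : SimpleGraph V)
    (hG : G.Connected) (h4 : IsEmpty (G ≃g SimpleGraph.cycleGraph 4))
    (k : ℕ) (hk1 : 1 ≤ k)
    (q : ℕ) (S : Fin q → Finset V) (hinj : Function.Injective S)
    (hcut : ∀ i, SameNbrCut G (S i)) :
    Nonempty
      ((Subgroup.closure {e : Equiv.Perm {A : Finset V // A.card = k} |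
          ∃ β : ∀ i, Set (delComp G (S i) → ℕ), (∀ i, β i ⊆ TS G (S i) k) ∧
            ∀ A : {A : Finset V // A.card = k},
              ((e A : {B : Finset V // B.card = k}) : Finset V) = psiFun G S β (↑A : Finset V)})
        ≃* (((i : Fin q) × (TS G (S i) k)) → Multiplicative (ZMod 2))) := by
  have hS := SameNbrCut.independentCuts hG h4 hinj hcut
  rw [← coe_range_psiHom hS hk1, Subgroup.closure_eq]
  exact ⟨(MonoidHom.ofInjective (injective_psiHom hS hk1)).symm⟩

/-- `𝒩 = ⟨{ψ_β : β ⊆ 𝒯_G}⟩ ≅ ℤ₂^{|𝒯_G|}`. -/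
theorem N_iso_Z2_pow [Fintype V] [DecidableEq V] (G : SimpleGraph V)
    (hG : G.Connected) (h4 : IsEmpty (G ≃g SimpleGraph.cycleGraph 4))
    (k : ℕ) (hk1 : 1 ≤ k) (hk2 : k ≤ Fintype.card V - 1)
    (q : ℕ) (S : Fin q → Finset V) (hinj : Function.Injective S)
    (hcut : ∀ i, SameNbrCut G (S i))
    (hall : ∀ T : Finset V, SameNbrCut G T → ∃ i, T = S i) :
    Nonempty
      ((Subgroup.closure {e : Equiv.Perm {A : Finset V // A.card = k} |
          ∃ β : ∀ i, Set (delComp G (S i) → ℕ), (∀ i, β i ⊆ TS G (S i) k) ∧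
            ∀ A : {A : Finset V // A.card = k},
              ((e A : {B : Finset V // B.card = k}) : Finset V) = psiFun G S β (↑A : Finset V)})
        ≃* (((i : Fin q) × (TS G (S i) k)) → Multiplicative (ZMod 2))) :=
  N_iso_Z2_pow_general G hG h4 k hk1 q S hinj hcut
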